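/- Let G be a connected weighted graph with cutset projection 𝒫, Laplacian L, incidence matrix B, weight matrix 𝒜, and natural frequencies ω ∈ 1ₙ^⊥. Fix γ ∈ [0, π/2) and p ∈ [1,∞], and let α_p(γ) > 0 be the minimum amplification factor. If ‖Bᵀ L† ω‖_p ≤ α_p(γ) γ, then there exists x* ∈ 1ₙ^⊥ with ‖Bᵀ x*‖_p ≤ γ (hence ‖Bᵀx*‖_∞ ≤ γ) solving the equilibrium equation ω = B𝒜 sin(Bᵀ x*). -/

import Mathlib

/-!
Instead of Brouwer's theorem we continue solutions of `B𝒜 sin(Bᵀ x) = t ω`, `x ⊥ 1`,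
`‖Bᵀ x‖_p ≤ γ`, from `t = 0` to `t = 1`. Writing `sin y = diag(sinc y) y` and applying `Bᵀ L†`
turns such a solution into `𝒫 diag(sinc y) y = t Bᵀ L† ω` with `y = Bᵀ x`, so the definition of
`α_p(γ)` and the hypothesis give `‖Bᵀ x‖_p ≤ t γ`. For `t < 1` the solution therefore lies
strictly inside the region, where `|Bᵀ x| < π / 2`: there the Jacobian `B𝒜 diag(cos Bᵀ x) Bᵀ` is
nonsingular on `1^⊥`, and the inverse function theorem continues the solution to slightly larger
`t`. The set of solvable `t` is closed by compactness, hence it is all of `[0, 1]`. When `γ = 0`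
the hypothesis forces `Bᵀ L† ω = 0`, hence `ω = L L† ω = 0`.
-/

open Matrix

/-- The unnormalized sinc function, `sinc t = sin t / t` with `sinc 0 = 1`. -/
noncomputable def sinc (t : ℝ) : ℝ := if t = 0 then 1 else Real.sin t / t

/-- The `p`-norm of a real vector, for `p ∈ [1,∞]`. -/
noncomputable def pnorm {k : ℕ} (p : ENNReal) [Fact (1 ≤ p)] (v : Fin k → ℝ) : ℝ :=
  ‖(WithLp.equiv p (Fin k → ℝ)).symm v‖

open Filter Topology

lemma sinc_mul_self (t : ℝ) : sinc t * t = Real.sin t := by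
  unfold sinc
  split_ifs with h
  · simp [h]
  · field_simp

section pnorm

variable {k : ℕ} (p : ENNReal) [Fact (1 ≤ p)]

lemma pnorm_nonneg (v : Fin k → ℝ) : 0 ≤ pnorm p v :=
  norm_nonneg _

@[simp]
lemma pnorm_zero : pnorm p (0 : Fin k → ℝ) = 0 := by
  simp [pnorm]

@[simp]
lemma pnorm_eq_zero {v : Fin k → ℝ} : pnorm p v = 0 ↔ v = 0 := by
  simp [pnorm]

lemma pnorm_smul (c : ℝ) (v : Fin k → ℝ) : pnorm p (c • v) = |c| * pnorm p v := by
  simp [pnorm, norm_smul]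

lemma abs_apply_le_pnorm (v : Fin k → ℝ) (e : Fin k) : |v e| ≤ pnorm p v :=
  PiLp.norm_apply_le ((WithLp.equiv p (Fin k → ℝ)).symm v) e

lemma continuous_pnorm : Continuous fun v : Fin k → ℝ => pnorm p v :=
  continuous_norm.comp (PiLp.continuousLinearEquiv p ℝ (fun _ : Fin k => ℝ)).symm.continuous

lemma isCompact_setOf_pnorm_le (γ : ℝ) : IsCompact {v : Fin k → ℝ | pnorm p v ≤ γ} := by
  convert (PiLp.continuousLinearEquiv p ℝ (fun _ : Fin k => ℝ)).symm.toHomeomorph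
    |>.isCompact_preimage.mpr (isCompact_closedBall 0 γ) using 1
  ext v
  simp [pnorm]

end pnorm

lemma sum_mul_sq_eq_zero_iff {E : Type*} [Fintype E] {d : E → ℝ} (hd : ∀ e, 0 < d e)
    (u : E → ℝ) : ∑ e, d e * u e ^ 2 = 0 ↔ u = 0 := by
  rw [Finset.sum_eq_zero_iff_of_nonneg fun e _ => by have := hd e; positivity, funext_iff]
  simp [(hd _).ne']

section Laplacian

variable {V E : Type*} [Fintype V] (B : Matrix V E ℝ)

lemma eq_zero_of_mulVec_transpose_eq_zero_of_sum_eq_zero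
    (hker : ∀ x : V → ℝ, Bᵀ *ᵥ x = 0 → ∃ c : ℝ, x = fun _ => c) {x : V → ℝ}
    (hB : Bᵀ *ᵥ x = 0) (hsum : ∑ i, x i = 0) : x = 0 := by
  obtain ⟨c, rfl⟩ := hker x hB
  funext i
  have : (Fintype.card V : ℝ) ≠ 0 := Nat.cast_ne_zero.mpr (@Fintype.card_ne_zero V _ ⟨i⟩)
  simp_all

variable [Fintype E]

lemma sum_mulVec_eq_zero (h1 : Bᵀ *ᵥ 1 = 0) (w : E → ℝ) : ∑ i, (B *ᵥ w) i = 0 := by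
  rw [← one_dotProduct, dotProduct_mulVec, ← mulVec_transpose, h1, zero_dotProduct]

variable [DecidableEq E]

lemma dotProduct_laplacian_mulVec (d : E → ℝ) (v : V → ℝ) :
    v ⬝ᵥ (B * diagonal d * Bᵀ) *ᵥ v = ∑ e, d e * (Bᵀ *ᵥ v) e ^ 2 := by
  rw [← mulVec_mulVec, ← mulVec_mulVec, dotProduct_mulVec, ← mulVec_transpose]
  simp only [dotProduct, mulVec_diagonal]
  exact Finset.sum_congr rfl fun e _ => by ring

lemma mulVec_transpose_eq_zero_of_laplacian_mulVec_eq_zero {d : E → ℝ} (hd : ∀ e, 0 < d e)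
    {v : V → ℝ} (h : (B * diagonal d * Bᵀ) *ᵥ v = 0) : Bᵀ *ᵥ v = 0 :=
  (sum_mul_sq_eq_zero_iff hd _).mp (by rw [← dotProduct_laplacian_mulVec, h, dotProduct_zero])

lemma laplacian_mul_pinv_mulVec_of_sum_eq_zero
    (hker : ∀ x : V → ℝ, Bᵀ *ᵥ x = 0 → ∃ c : ℝ, x = fun _ => c) (h1 : Bᵀ *ᵥ 1 = 0)
    {a : E → ℝ} (ha : ∀ e, 0 < a e) {L Ldag : Matrix V V ℝ} (hL : L = B * diagonal a * Bᵀ)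
    (hmp1 : L * Ldag * L = L) (hmp3 : (L * Ldag)ᵀ = L * Ldag) {ω : V → ℝ}
    (hω : ∑ i, ω i = 0) : (L * Ldag) *ᵥ ω = ω := by
  have hLsymm : Lᵀ = L := by simp [hL, transpose_mul, Matrix.mul_assoc]
  have hLQ : L * (L * Ldag) = L := by
    calc L * (L * Ldag) = (L * Ldag * L)ᵀ := by rw [transpose_mul, hmp3, hLsymm]
      _ = L := by rw [hmp1, hLsymm]
  have hQ : L * Ldag = B * (diagonal a * Bᵀ * Ldag) := by simp [hL, Matrix.mul_assoc]
  set u := ω - (L * Ldag) *ᵥ ω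
  have hLu : L *ᵥ u = 0 := by simp [u, mulVec_sub, mulVec_mulVec, hLQ]
  have hsum : ∑ i, u i = 0 := by
    simp [u, Finset.sum_sub_distrib, hω, hQ, ← mulVec_mulVec, sum_mulVec_eq_zero B h1]
  have hu : u = 0 := eq_zero_of_mulVec_transpose_eq_zero_of_sum_eq_zero B hker
    (mulVec_transpose_eq_zero_of_laplacian_mulVec_eq_zero B ha (hL ▸ hLu)) hsum
  exact (sub_eq_zero.mp hu).symm

end Laplacian

section Coupling

variable {V E : Type*} [Fintype V] [Fintype E] [DecidableEq E] (B : Matrix V E ℝ) (a : E → ℝ)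

noncomputable def coupling (x : V → ℝ) : V → ℝ :=
  (B * diagonal a) *ᵥ fun e => Real.sin ((Bᵀ *ᵥ x) e)

/-- The rank-one term breaks the rotational symmetry `x ↦ x + c • 1` of `coupling`. -/
noncomputable def groundedCoupling (x : V → ℝ) : V → ℝ :=
  coupling B a x + fun _ => ∑ i, x i

lemma groundedCoupling_eq_coupling {x : V → ℝ} (hx : ∑ i, x i = 0) :
    groundedCoupling B a x = coupling B a x := by
  simp [groundedCoupling, hx, ← Pi.zero_def]

lemma hasStrictFDerivAt_coupling (x₀ : V → ℝ) :
    HasStrictFDerivAt (coupling B a)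
      (B * diagonal (fun e => a e * Real.cos ((Bᵀ *ᵥ x₀) e)) * Bᵀ).mulVecLin.toContinuousLinearMap
      x₀ := by
  have hsin : HasStrictFDerivAt (fun x : V → ℝ => fun e => Real.sin ((Bᵀ *ᵥ x) e))
      (diagonal (fun e => Real.cos ((Bᵀ *ᵥ x₀) e)) * Bᵀ).mulVecLin.toContinuousLinearMap x₀ :=
    hasStrictFDerivAt_pi'' fun e => ((ContinuousLinearMap.proj e).comp
      Bᵀ.mulVecLin.toContinuousLinearMap).hasStrictFDerivAt.sin.congr_fderiv <| by
        ext v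
        simp [mulVec_diagonal, mulVec_transpose, mul_comm]
  refine ((B * diagonal a).mulVecLin.toContinuousLinearMap.hasStrictFDerivAt.comp x₀
    hsin).congr_fderiv ?_
  ext v
  simp [mulVec_mulVec, Matrix.mul_assoc, diagonal_mul_diagonal]

lemma hasStrictFDerivAt_groundedCoupling (x₀ : V → ℝ) :
    HasStrictFDerivAt (groundedCoupling B a)
      (B * diagonal (fun e => a e * Real.cos ((Bᵀ *ᵥ x₀) e)) * Bᵀ +
        of fun _ _ => 1).mulVecLin.toContinuousLinearMap x₀ := by
  have hsum : HasStrictFDerivAt (fun x : V → ℝ => fun _ : V => ∑ i, x i)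
      (of fun _ _ => (1 : ℝ) : Matrix V V ℝ).mulVecLin.toContinuousLinearMap x₀ :=
    (of fun _ _ => (1 : ℝ) : Matrix V V ℝ).mulVecLin.toContinuousLinearMap.hasStrictFDerivAt
      |>.congr_of_eventuallyEq <| .of_forall fun x => by ext; simp [mulVec, dotProduct]
  refine ((hasStrictFDerivAt_coupling B a x₀).add hsum).congr_fderiv ?_
  ext v
  simp

lemma injective_mulVec_laplacian_add_ones
    (hker : ∀ x : V → ℝ, Bᵀ *ᵥ x = 0 → ∃ c : ℝ, x = fun _ => c) {d : E → ℝ}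
    (hd : ∀ e, 0 < d e) : Function.Injective (B * diagonal d * Bᵀ + of fun _ _ => 1).mulVecLin := by
  rw [← LinearMap.ker_eq_bot, LinearMap.ker_eq_bot']
  intro v hv
  have hq : ∑ e, d e * (Bᵀ *ᵥ v) e ^ 2 + (∑ i, v i) ^ 2 = 0 := by
    have := congrArg (v ⬝ᵥ ·) hv
    simp only [mulVecLin_apply, add_mulVec, dotProduct_add, dotProduct_laplacian_mulVec,
      dotProduct_zero] at this
    convert this using 2
    simp [dotProduct, mulVec, sq, Finset.mul_sum, mul_comm]
  obtain ⟨hB, hsum⟩ := (add_eq_zero_iff_of_nonneg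
    (Finset.sum_nonneg fun e _ => by have := hd e; positivity) (sq_nonneg _)).mp hq
  exact eq_zero_of_mulVec_transpose_eq_zero_of_sum_eq_zero B hker
    ((sum_mul_sq_eq_zero_iff hd _).mp hB) (pow_eq_zero_iff two_ne_zero |>.mp hsum)

lemma sum_eq_zero_of_groundedCoupling_eq_smul (h1 : Bᵀ *ᵥ 1 = 0) {ω : V → ℝ}
    (hω : ∑ i, ω i = 0) {x : V → ℝ} {t : ℝ} (h : groundedCoupling B a x = t • ω) :
    ∑ i, x i = 0 := by
  rcases isEmpty_or_nonempty V with hV | hV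
  · simp
  have := congrArg (fun y => ∑ i, y i) h
  simp [groundedCoupling, coupling, Finset.sum_add_distrib, ← mulVec_mulVec,
    sum_mulVec_eq_zero B h1, ← Finset.mul_sum, hω] at this
  simpa [Fintype.card_ne_zero] using this

lemma eventually_exists_coupling_eq_smul
    (hker : ∀ x : V → ℝ, Bᵀ *ᵥ x = 0 → ∃ c : ℝ, x = fun _ => c) (h1 : Bᵀ *ᵥ 1 = 0)
    (ha : ∀ e, 0 < a e) {x₀ : V → ℝ} (hcos : ∀ e, 0 < Real.cos ((Bᵀ *ᵥ x₀) e))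
    (hx₀ : ∑ i, x₀ i = 0) {ω : V → ℝ} (hω : ∑ i, ω i = 0) {t : ℝ}
    (ht : coupling B a x₀ = t • ω) {U : Set (V → ℝ)} (hU : U ∈ 𝓝 x₀) :
    ∀ᶠ s in 𝓝 t, ∃ x ∈ U, ∑ i, x i = 0 ∧ coupling B a x = s • ω := by
  have hinj := injective_mulVec_laplacian_add_ones B hker fun e => mul_pos (ha e) (hcos e)
  have hmap := HasStrictFDerivAt.map_nhds_eq_of_equiv
    (f' := (LinearEquiv.ofInjectiveEndo _ hinj).toContinuousLinearEquiv)
    (hasStrictFDerivAt_groundedCoupling B a x₀)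
  have himage : groundedCoupling B a '' U ∈ 𝓝 (t • ω) := by
    rw [← ht, ← groundedCoupling_eq_coupling B a hx₀, ← hmap]
    exact image_mem_map hU
  filter_upwards [(continuous_id.smul continuous_const).continuousAt.preimage_mem_nhds himage]
    with s ⟨x, hxU, hx⟩
  have hsum := sum_eq_zero_of_groundedCoupling_eq_smul B a h1 hω hx
  exact ⟨x, hxU, hsum, groundedCoupling_eq_coupling B a hsum ▸ hx⟩

end Coupling

section Synchronization

variable {V : Type*} [Fintype V] {m : ℕ} (p : ENNReal) [Fact (1 ≤ p)] (B : Matrix V (Fin m) ℝ)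

lemma isCompact_setOf_sum_eq_zero_pnorm_le
    (hker : ∀ x : V → ℝ, Bᵀ *ᵥ x = 0 → ∃ c : ℝ, x = fun _ => c) (γ : ℝ) :
    IsCompact {x : V → ℝ | ∑ i, x i = 0 ∧ pnorm p (Bᵀ *ᵥ x) ≤ γ} := by
  let T := Bᵀ.mulVecLin.prod (dotProductBilin ℝ ℝ (1 : V → ℝ))
  have hT : LinearMap.ker T = ⊥ := LinearMap.ker_eq_bot'.mpr fun x hx =>
    eq_zero_of_mulVec_transpose_eq_zero_of_sum_eq_zero B hker (congrArg Prod.fst hx)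
      (by simpa [T, one_dotProduct] using congrArg Prod.snd hx)
  convert (LinearMap.isClosedEmbedding_of_injective hT).isCompact_preimage
    ((isCompact_setOf_pnorm_le p γ).prod (isCompact_singleton (x := (0 : ℝ)))) using 1
  ext x
  simp [T, and_comm, one_dotProduct, mulVec_transpose]

/-- The minimum amplification factor `α_p(γ)` is the infimum of this set. -/
def amplificationSet (P : Matrix (Fin m) (Fin m) ℝ) (γ : ℝ) : Set ℝ :=
  {r : ℝ | ∃ y z : Fin m → ℝ,
    (∃ ξ : V → ℝ, y = Bᵀ *ᵥ ξ) ∧ pnorm p y ≤ γ ∧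
    (∃ ξ : V → ℝ, z = Bᵀ *ᵥ ξ) ∧ pnorm p z = 1 ∧
    r = pnorm p (P *ᵥ fun e => sinc (y e) * z e)}

lemma mul_pnorm_le_pnorm_mulVec_sin {P : Matrix (Fin m) (Fin m) ℝ} {γ α : ℝ}
    (hα : α ∈ lowerBounds (amplificationSet p B P γ)) {x : V → ℝ}
    (hx : pnorm p (Bᵀ *ᵥ x) ≤ γ) :
    α * pnorm p (Bᵀ *ᵥ x) ≤ pnorm p (P *ᵥ fun e => Real.sin ((Bᵀ *ᵥ x) e)) := by
  set y := Bᵀ *ᵥ x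
  rcases eq_or_ne y 0 with hy | hy
  · simp [hy, ← Pi.zero_def]
  have ht : 0 < pnorm p y := (pnorm_nonneg p y).lt_of_ne' ((pnorm_eq_zero p).not.mpr hy)
  have hz : pnorm p ((pnorm p y)⁻¹ • y) = 1 := by
    rw [pnorm_smul, abs_inv, abs_of_pos ht, inv_mul_cancel₀ ht.ne']
  have hsinc : (fun e => sinc (y e) * ((pnorm p y)⁻¹ • y) e) =
      (pnorm p y)⁻¹ • fun e => Real.sin (y e) := by
    ext e
    simp [← sinc_mul_self (y e)]
    ring
  have hαle := hα
    ⟨y, (pnorm p y)⁻¹ • y, ⟨x, rfl⟩, hx, ⟨(pnorm p y)⁻¹ • x, (mulVec_smul ..).symm⟩, hz, rfl⟩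
  rw [hsinc, mulVec_smul, pnorm_smul, abs_inv, abs_of_pos ht] at hαle
  rwa [le_inv_mul_iff₀ ht, mul_comm] at hαle

lemma pnorm_le_mul_of_coupling_eq_smul {a : Fin m → ℝ} {Ldag : Matrix V V ℝ}
    {P : Matrix (Fin m) (Fin m) ℝ} (hP : P = Bᵀ * Ldag * B * diagonal a) {ω : V → ℝ} {γ α : ℝ}
    (hα : α ∈ lowerBounds (amplificationSet p B P γ)) (hαpos : 0 < α)
    (hcond : pnorm p ((Bᵀ * Ldag) *ᵥ ω) ≤ α * γ) {x : V → ℝ} {t : ℝ} (ht : 0 ≤ t)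
    (hx : pnorm p (Bᵀ *ᵥ x) ≤ γ) (heq : coupling B a x = t • ω) :
    pnorm p (Bᵀ *ᵥ x) ≤ t * γ := by
  have hPsin : (P *ᵥ fun e => Real.sin ((Bᵀ *ᵥ x) e)) = t • (Bᵀ * Ldag) *ᵥ ω := by
    rw [hP, show Bᵀ * Ldag * B * diagonal a = (Bᵀ * Ldag) * (B * diagonal a) by
      simp [Matrix.mul_assoc], ← mulVec_mulVec, ← mulVec_smul]
    exact congrArg _ heq
  have hamp := mul_pnorm_le_pnorm_mulVec_sin p B hα hx
  rw [hPsin, pnorm_smul, abs_of_nonneg ht] at hamp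
  refine le_of_mul_le_mul_left ?_ hαpos
  calc α * pnorm p (Bᵀ *ᵥ x) ≤ t * pnorm p ((Bᵀ * Ldag) *ᵥ ω) := hamp
    _ ≤ t * (α * γ) := mul_le_mul_of_nonneg_left hcond ht
    _ = α * (t * γ) := by ring

theorem exists_coupling_eq_of_forall_pnorm_le_mul
    (hker : ∀ x : V → ℝ, Bᵀ *ᵥ x = 0 → ∃ c : ℝ, x = fun _ => c) (h1 : Bᵀ *ᵥ 1 = 0)
    {a : Fin m → ℝ} (ha : ∀ e, 0 < a e) {ω : V → ℝ} (hω : ∑ i, ω i = 0) {γ : ℝ} (hγ : 0 < γ)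
    (hγπ : γ < Real.pi / 2)
    (hbound : ∀ (x : V → ℝ) (t : ℝ), 0 ≤ t → pnorm p (Bᵀ *ᵥ x) ≤ γ →
      coupling B a x = t • ω → pnorm p (Bᵀ *ᵥ x) ≤ t * γ) :
    ∃ x : V → ℝ, ∑ i, x i = 0 ∧ pnorm p (Bᵀ *ᵥ x) ≤ γ ∧ coupling B a x = ω := by
  set K := {x : V → ℝ | ∑ i, x i = 0 ∧ pnorm p (Bᵀ *ᵥ x) ≤ γ}
  set T := (fun t : ℝ => t • ω) ⁻¹' (coupling B a '' K)
  have hcont : Continuous (coupling B a) :=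
    continuous_iff_continuousAt.mpr fun x => (hasStrictFDerivAt_coupling B a x).continuousAt
  have hT : IsClosed T := ((isCompact_setOf_sum_eq_zero_pnorm_le p B hker γ).image
    hcont).isClosed.preimage (continuous_id.smul continuous_const)
  have h0 : (0 : ℝ) ∈ T := ⟨0, ⟨by simp, by simpa using hγ.le⟩, by simp [coupling, ← Pi.zero_def]⟩
  have hstep : ∀ t ∈ T ∩ Set.Ico 0 1, T ∈ 𝓝[>] t := by
    rintro t ⟨⟨x₀, ⟨hx₀sum, hx₀γ⟩, hx₀⟩, ht0, ht1⟩
    have hlt : pnorm p (Bᵀ *ᵥ x₀) < γ :=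
      (hbound x₀ t ht0 hx₀γ hx₀).trans_lt (mul_lt_of_lt_one_left hγ ht1)
    have hcos (e : Fin m) : 0 < Real.cos ((Bᵀ *ᵥ x₀) e) :=
      Real.cos_pos_of_mem_Ioo (abs_lt.mp ((abs_apply_le_pnorm p _ e).trans_lt (hlt.trans hγπ)))
    have hU : {x | pnorm p (Bᵀ *ᵥ x) < γ} ∈ 𝓝 x₀ :=
      (isOpen_lt ((continuous_pnorm p).comp (Continuous.matrix_mulVec continuous_const
        continuous_id)) continuous_const).mem_nhds hlt
    refine mem_nhdsWithin_of_mem_nhds ?_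
    filter_upwards [eventually_exists_coupling_eq_smul B a hker h1 ha hcos hx₀sum hω hx₀ hU]
      with s ⟨x, hxU, hxsum, hx⟩
    exact ⟨x, ⟨hxsum, hxU.le⟩, hx⟩
  obtain ⟨x, ⟨hxsum, hxγ⟩, hx⟩ := (hT.inter isClosed_Icc).Icc_subset_of_forall_mem_nhdsWithin h0
    hstep ⟨zero_le_one, le_rfl⟩
  exact ⟨x, hxsum, hxγ, by simpa using hx⟩

end Synchronization

theorem sufficient_condition_for_synchronization_general
    (n m : ℕ) (B : Matrix (Fin n) (Fin m) ℝ) (a : Fin m → ℝ)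
    (ha : ∀ e, 0 < a e)
    (hconn : ∀ x : Fin n → ℝ, Bᵀ.mulVec x = 0 ↔ ∃ c : ℝ, x = fun _ => c)
    (L Ldag : Matrix (Fin n) (Fin n) ℝ)
    (hL : L = B * Matrix.diagonal a * Bᵀ)
    (hmp1 : L * Ldag * L = L)
    (hmp3 : (L * Ldag)ᵀ = L * Ldag)
    (P : Matrix (Fin m) (Fin m) ℝ)
    (hP : P = Bᵀ * Ldag * B * Matrix.diagonal a)
    (ω : Fin n → ℝ) (hω : ∑ i, ω i = 0)
    (γ : ℝ) (hγ : 0 ≤ γ ∧ γ < Real.pi / 2)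
    (p : ENNReal) [Fact (1 ≤ p)]
    (α : ℝ) (hαpos : 0 < α)
    (hα : α = sInf {r : ℝ | ∃ y z : Fin m → ℝ,
      (∃ ξ : Fin n → ℝ, y = Bᵀ.mulVec ξ) ∧ pnorm p y ≤ γ ∧
      (∃ ξ : Fin n → ℝ, z = Bᵀ.mulVec ξ) ∧ pnorm p z = 1 ∧
      r = pnorm p (P.mulVec (fun e => sinc (y e) * z e))})
    (hcond : pnorm p ((Bᵀ * Ldag).mulVec ω) ≤ α * γ) :
    ∃ xstar : Fin n → ℝ, (∑ i, xstar i = 0) ∧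
      pnorm p (Bᵀ.mulVec xstar) ≤ γ ∧
      (∀ e, |Bᵀ.mulVec xstar e| ≤ γ) ∧
      ω = (B * Matrix.diagonal a).mulVec (fun e => Real.sin (Bᵀ.mulVec xstar e)) := by
  obtain ⟨hγ0, hγπ⟩ := hγ
  have hker (x : Fin n → ℝ) : Bᵀ *ᵥ x = 0 → ∃ c : ℝ, x = fun _ => c := (hconn x).mp
  have h1 : Bᵀ *ᵥ 1 = 0 := (hconn 1).mpr ⟨1, rfl⟩
  have hαlb : α ∈ lowerBounds (amplificationSet p B P γ) := fun r hr => by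
    rw [hα]
    exact csInf_le ⟨0, fun _ ⟨_, _, _, _, _, _, hr⟩ => hr ▸ pnorm_nonneg p _⟩ hr
  obtain ⟨x, hxsum, hxγ, hx⟩ :
      ∃ x : Fin n → ℝ, ∑ i, x i = 0 ∧ pnorm p (Bᵀ *ᵥ x) ≤ γ ∧ coupling B a x = ω := by
    rcases hγ0.eq_or_lt with rfl | hγpos
    · have hBLω : (Bᵀ * Ldag) *ᵥ ω = 0 :=
        (pnorm_eq_zero p).mp (le_antisymm (by simpa using hcond) (pnorm_nonneg p _))
      have hω0 : ω = 0 := by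
        rw [← laplacian_mul_pinv_mulVec_of_sum_eq_zero B hker h1 ha hL hmp1 hmp3 hω, hL,
          Matrix.mul_assoc, ← mulVec_mulVec, hBLω, mulVec_zero]
      exact ⟨0, by simp, by simp, by simp [coupling, hω0, ← Pi.zero_def]⟩
    · exact exists_coupling_eq_of_forall_pnorm_le_mul p B hker h1 ha hω hγpos hγπ
        fun x t ht hx heq => pnorm_le_mul_of_coupling_eq_smul p B hP hαlb hαpos hcond ht hx heq
  exact ⟨x, hxsum, hxγ, fun e => (abs_apply_le_pnorm p _ e).trans hxγ, hx.symm⟩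

/-- **main sufficient condition for synchronization.** For a connected
weighted graph with incidence matrix `B`, weight matrix `𝒜`, Laplacian `L = B𝒜Bᵀ`,
pseudoinverse `L†`, cutset projection `𝒫 = Bᵀ L† B𝒜`, frequencies `ω ⊥ 1ₙ`,
`γ ∈ [0, π/2)`, `p ∈ [1,∞]`, and minimum amplification factor
`α = α_p(γ) = inf { ‖𝒫 diag(sinc y) z‖_p : y, z ∈ Im(Bᵀ), ‖y‖_p ≤ γ, ‖z‖_p = 1 } > 0`:
if `‖Bᵀ L† ω‖_p ≤ α γ`, then there exists `x* ∈ 1ₙ^⊥` with `‖Bᵀ x*‖_p ≤ γ` (hence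
`‖Bᵀ x*‖_∞ ≤ γ`) solving the equilibrium equation `ω = B𝒜 sin(Bᵀ x*)`. -/
theorem sufficient_condition_for_synchronization
    (n m : ℕ) (B : Matrix (Fin n) (Fin m) ℝ) (a : Fin m → ℝ)
    (ha : ∀ e, 0 < a e)
    (hconn : ∀ x : Fin n → ℝ, Bᵀ.mulVec x = 0 ↔ ∃ c : ℝ, x = fun _ => c)
    (L Ldag : Matrix (Fin n) (Fin n) ℝ)
    (hL : L = B * Matrix.diagonal a * Bᵀ)
    (hmp1 : L * Ldag * L = L) (hmp2 : Ldag * L * Ldag = Ldag)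
    (hmp3 : (L * Ldag)ᵀ = L * Ldag) (hmp4 : (Ldag * L)ᵀ = Ldag * L)
    (P : Matrix (Fin m) (Fin m) ℝ)
    (hP : P = Bᵀ * Ldag * B * Matrix.diagonal a)
    (ω : Fin n → ℝ) (hω : ∑ i, ω i = 0)
    (γ : ℝ) (hγ : 0 ≤ γ ∧ γ < Real.pi / 2)
    (p : ENNReal) [Fact (1 ≤ p)]
    (α : ℝ) (hαpos : 0 < α)
    (hα : α = sInf {r : ℝ | ∃ y z : Fin m → ℝ,
      (∃ ξ : Fin n → ℝ, y = Bᵀ.mulVec ξ) ∧ pnorm p y ≤ γ ∧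
      (∃ ξ : Fin n → ℝ, z = Bᵀ.mulVec ξ) ∧ pnorm p z = 1 ∧
      r = pnorm p (P.mulVec (fun e => sinc (y e) * z e))})
    (hcond : pnorm p ((Bᵀ * Ldag).mulVec ω) ≤ α * γ) :
    ∃ xstar : Fin n → ℝ, (∑ i, xstar i = 0) ∧
      pnorm p (Bᵀ.mulVec xstar) ≤ γ ∧
      (∀ e, |Bᵀ.mulVec xstar e| ≤ γ) ∧
      ω = (B * Matrix.diagonal a).mulVec (fun e => Real.sin (Bᵀ.mulVec xstar e)) :=
  sufficient_condition_for_synchronization_general n m B a ha hconn L Ldag hL hmp1 hmp3 P hP ω hω γ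
    hγ p α hαpos hα hcond
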